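/- In model M, for every n ≥ 0 and s ≥ 1 the s-th moment has the closed form E(W_n^s) = (∏_{j=0}^{n−1} α_{j,s}) · ( W_0^s + Σ_{ℓ=0}^{n−1} β_{ℓ,s} / ∏_{j=0}^{ℓ} α_{j,s} ), where α_{n,s} := Σ_{ℓ=0}^{s} c^ℓ·C(s,ℓ)·C(m,ℓ)/C(T_n,ℓ) and β_{n,s} := Σ_{i=2}^{s} E(W_n^{s+1−i}) · Σ_{ℓ=i}^{s} C(s,ℓ)·c^ℓ · Σ_{j=ℓ+1−i}^{ℓ} (−1)^{j+i−1−ℓ} · S(ℓ,j)·c₁(j, ℓ+1−i)·C(m,j)/C(T_n,j). -/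

import Mathlib

open Finset

/-- Total number of balls after `n` draws: `T_n = W_0 + B_0 + n·m·c`. -/
def urnT (W0 B0 m c n : ℕ) : ℕ := W0 + B0 + n * m * c

/-- Probability mass function of the number of white balls after `n` draws in the
Chen–Wei model `M` (at each step `m` balls are drawn without replacement and, for
each drawn ball, `c` balls of the same color are added). -/
noncomputable def massM (W0 B0 m c : ℕ) : ℕ → ℕ → ℝ
  | 0 => fun v => if v = W0 then 1 else 0
  | n + 1 => fun v =>
      ∑ w ∈ Finset.range (urnT W0 B0 m c n + 1), ∑ k ∈ Finset.range (m + 1),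
        if v = w + c * k then
          massM W0 B0 m c n w *
            ((Nat.choose w k * Nat.choose (urnT W0 B0 m c n - w) (m - k) : ℝ) /
              (Nat.choose (urnT W0 B0 m c n) m : ℝ))
        else 0

/-- The `s`-th moment `E(W_n^s)` of the number of white balls in model `M`. -/
noncomputable def momM (W0 B0 m c s n : ℕ) : ℝ :=
  ∑ w ∈ Finset.range (urnT W0 B0 m c n + 1), massM W0 B0 m c n w * (w : ℝ) ^ s

/-- Stirling numbers of the second kind `S(n,k)`. -/
def stirling2 : ℕ → ℕ → ℕ
  | 0, 0 => 1
  | 0, _ + 1 => 0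
  | _ + 1, 0 => 0
  | n + 1, k + 1 => (k + 1) * stirling2 n (k + 1) + stirling2 n k

/-- Unsigned Stirling numbers of the first kind `c₁(n,k)`. -/
def stirling1 : ℕ → ℕ → ℕ
  | 0, 0 => 1
  | 0, _ + 1 => 0
  | _ + 1, 0 => 0
  | n + 1, k + 1 => n * stirling1 n (k + 1) + stirling1 n k

/-- The coefficient `α_{n,s}` of the moment recurrence in model `M`. -/
noncomputable def alphaM (W0 B0 m c n s : ℕ) : ℝ :=
  ∑ ℓ ∈ Finset.range (s + 1),
    (c : ℝ) ^ ℓ * (Nat.choose s ℓ * Nat.choose m ℓ : ℝ) /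
      (Nat.choose (urnT W0 B0 m c n) ℓ : ℝ)

/-- The inhomogeneous term `β_{n,s}` of the moment recurrence in model `M`. -/
noncomputable def betaM (W0 B0 m c n s : ℕ) : ℝ :=
  ∑ i ∈ Finset.Icc 2 s, momM W0 B0 m c (s + 1 - i) n *
    ∑ ℓ ∈ Finset.Icc i s, (Nat.choose s ℓ : ℝ) * (c : ℝ) ^ ℓ *
      ∑ j ∈ Finset.Icc (ℓ + 1 - i) ℓ, (-1 : ℝ) ^ (j + i - 1 - ℓ) *
        (stirling2 ℓ j * stirling1 j (ℓ + 1 - i) * Nat.choose m j : ℝ) /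
        (Nat.choose (urnT W0 B0 m c n) j : ℝ)

/-!
Given `W_n = w`, the number `K` of white balls drawn is hypergeometric with factorial moments
`E[K^(j)] = w^(j) C(m,j) / C(T_n,j)`. Expanding `(w + cK)^s` binomially, `K^ℓ` in falling
factorials (Stirling numbers of the second kind) and then `w^(j)` in powers of `w` (signed Stirling
numbers of the first kind) gives `E[W_{n+1}^s | W_n = w] = α_{n,s} w^s + Σ_{i=2}^s b_i w^(s+1-i)`
with `b_i` the coefficients of `β_{n,s}`. Averaging over `w` yields the linear recurrence
`E W_{n+1}^s = α_{n,s} E W_n^s + β_{n,s}`, which unrolls to the closed form since `α_{n,s} ≥ 1`.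
-/

open Polynomial

theorem stirling1_eq_stirlingFirst : stirling1 = Nat.stirlingFirst := by
  funext n k
  induction n generalizing k with
  | zero => cases k <;> rfl
  | succ n ih => cases k <;> simp [stirling1, Nat.stirlingFirst_succ_succ, ih]

theorem stirling2_eq_stirlingSecond : stirling2 = Nat.stirlingSecond := by
  funext n k
  induction n generalizing k with
  | zero => cases k <;> rfl
  | succ n ih => cases k <;> simp [stirling2, Nat.stirlingSecond_succ_succ, ih]

theorem Finset.sum_range_shift_of_eq_zero {M : Type*} [AddCommMonoid M] (g : ℕ → M) (n : ℕ)
    (h0 : g 0 = 0) (hn : g (n + 1) = 0) :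
    ∑ k ∈ range (n + 1), g (k + 1) = ∑ k ∈ range (n + 1), g k := by
  rw [sum_range_succ, hn, add_zero, sum_range_succ', h0, add_zero]

section Pochhammer

variable {R : Type*}

theorem ascPochhammer_eval_eq_sum_stirlingFirst [CommSemiring R] (n : ℕ) (r : R) :
    (ascPochhammer R n).eval r = ∑ k ∈ range (n + 1), (Nat.stirlingFirst n k : R) * r ^ k := by
  induction n with
  | zero => simp
  | succ n ih =>
    have hstep (k : ℕ) : (Nat.stirlingFirst n k : R) * r ^ k * (r + n) =
        Nat.stirlingFirst n k * r ^ (k + 1) + n * Nat.stirlingFirst n k * r ^ k := by ring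
    have hshift := sum_range_shift_of_eq_zero (fun k => (n * Nat.stirlingFirst n k : R) * r ^ k) n
      (by cases n <;> simp) (by simp [Nat.stirlingFirst_eq_zero_of_lt])
    rw [ascPochhammer_succ_eval, ih, sum_mul, sum_congr rfl fun k _ => hstep k, sum_add_distrib,
      ← hshift, ← sum_add_distrib, sum_range_succ' _ (n + 1), Nat.stirlingFirst_succ_zero,
      Nat.cast_zero, zero_mul, add_zero]
    refine sum_congr rfl fun k _ => ?_
    rw [Nat.stirlingFirst_succ_succ]
    push_cast
    ring

theorem descPochhammer_eval_eq_sum_stirlingFirst [CommRing R] (n : ℕ) (r : R) :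
    (descPochhammer R n).eval r =
      ∑ k ∈ range (n + 1), (-1) ^ (n + k) * (Nat.stirlingFirst n k : R) * r ^ k := by
  calc (descPochhammer R n).eval r = (-1) ^ n * ((-1) ^ n * (descPochhammer R n).eval r) := by
        rw [← mul_assoc, ← mul_pow, neg_one_mul, neg_neg, one_pow, one_mul]
    _ = (-1) ^ n * (ascPochhammer R n).eval (-r) := by
        rw [ascPochhammer_eval_neg_eq_descPochhammer]
    _ = _ := by
        rw [ascPochhammer_eval_eq_sum_stirlingFirst, mul_sum]
        refine sum_congr rfl fun k _ => by rw [neg_pow, pow_add]; ring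

theorem pow_eq_sum_stirlingSecond_mul_descPochhammer_eval [CommRing R] (n : ℕ) (r : R) :
    r ^ n = ∑ j ∈ range (n + 1), (Nat.stirlingSecond n j : R) * (descPochhammer R j).eval r := by
  induction n with
  | zero => simp
  | succ n ih =>
    have hstep (j : ℕ) : (Nat.stirlingSecond n j : R) * (descPochhammer R j).eval r * r =
        Nat.stirlingSecond n j * (descPochhammer R (j + 1)).eval r +
          j * Nat.stirlingSecond n j * (descPochhammer R j).eval r := by
      rw [descPochhammer_succ_eval]; ring
    have hshift := sum_range_shift_of_eq_zero
      (fun j => (j * Nat.stirlingSecond n j : R) * (descPochhammer R j).eval r) n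
      (by simp) (by simp [Nat.stirlingSecond_eq_zero_of_lt])
    rw [pow_succ, ih, sum_mul, sum_congr rfl fun j _ => hstep j, sum_add_distrib, ← hshift,
      ← sum_add_distrib, sum_range_succ' _ (n + 1), Nat.stirlingSecond_succ_zero, Nat.cast_zero,
      zero_mul, add_zero]
    refine sum_congr rfl fun j _ => ?_
    rw [Nat.stirlingSecond_succ_succ]
    push_cast
    ring

theorem sum_mul_descPochhammer_eval [CommRing R] (n : ℕ) (b : ℕ → R) (x : R) :
    ∑ j ∈ range (n + 1), b j * (descPochhammer R j).eval x =
      ∑ t ∈ range (n + 1),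
        (∑ j ∈ Icc t n, (-1) ^ (j + t) * (Nat.stirlingFirst j t : R) * b j) * x ^ t := by
  calc ∑ j ∈ range (n + 1), b j * (descPochhammer R j).eval x
      = ∑ j ∈ range (n + 1), ∑ t ∈ range (j + 1),
          (-1) ^ (j + t) * (Nat.stirlingFirst j t : R) * b j * x ^ t :=
        sum_congr rfl fun j _ => by
          rw [descPochhammer_eval_eq_sum_stirlingFirst, mul_sum]
          exact sum_congr rfl fun t _ => by ring
    _ = ∑ t ∈ range (n + 1), ∑ j ∈ Icc t n,
          (-1) ^ (j + t) * (Nat.stirlingFirst j t : R) * b j * x ^ t :=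
        sum_comm' fun j t => by simp only [mem_range, mem_Icc]; omega
    _ = _ := sum_congr rfl fun t _ => by rw [sum_mul]

-- The coefficient of `x ^ t` is indexed by `i = ℓ + 1 - t`, as in `β_{n,s}`.
theorem sum_stirlingSecond_mul_descPochhammer_eval [CommRing R] (ℓ : ℕ) (a : ℕ → R) (x : R) :
    ∑ j ∈ range (ℓ + 1), (Nat.stirlingSecond ℓ j : R) * a j * (descPochhammer R j).eval x =
      a ℓ * x ^ ℓ + ∑ i ∈ Icc 2 ℓ,
        (∑ j ∈ Icc (ℓ + 1 - i) ℓ, (-1) ^ (j + i - 1 - ℓ) *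
          (Nat.stirlingSecond ℓ j * Nat.stirlingFirst j (ℓ + 1 - i) : R) * a j) *
            x ^ (ℓ + 1 - i) := by
  rw [sum_mul_descPochhammer_eval, sum_range_succ, add_comm]
  congr 1
  · simp [Nat.stirlingFirst_self, Nat.stirlingSecond_self, ← two_mul, pow_mul]
  cases ℓ with
  | zero => simp
  | succ n =>
    have hconst : ∀ j ∈ Icc 0 (n + 1), (-1) ^ (j + 0) * (Nat.stirlingFirst j 0 : R) *
        (Nat.stirlingSecond (n + 1) j * a j) = 0 := by
      intro j _
      cases j <;> simp
    rw [sum_range_succ', sum_eq_zero hconst, zero_mul, add_zero]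
    symm
    refine sum_nbij' (fun i => n + 1 - i) (fun t => n + 1 - t) ?_ ?_ ?_ ?_ ?_
    · intro i hi; simp only [mem_Icc, mem_range] at hi ⊢; omega
    · intro t ht; simp only [mem_Icc, mem_range] at ht ⊢; omega
    · intro i hi; simp only [mem_Icc] at hi; omega
    · intro t ht; simp only [mem_range] at ht; omega
    · intro i hi
      simp only [mem_Icc] at hi
      rw [show n + 1 - i + 1 = n + 1 + 1 - i by omega]
      congr 1
      refine sum_congr rfl fun j hj => ?_
      simp only [mem_Icc] at hj
      rw [show j + (n + 1 + 1 - i) = j + i - 1 - (n + 1) + 2 * (n + 1 + 1 - i) by omega,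
        pow_add, pow_mul, neg_one_sq, one_pow, mul_one]
      ring

end Pochhammer

theorem Nat.sum_choose_mul_choose_mul_choose (w b m j : ℕ) (hj : j ≤ m) :
    ∑ k ∈ range (m + 1), w.choose k * b.choose (m - k) * k.choose j =
      w.choose j * (w - j + b).choose (m - j) := by
  have hlow : ∑ k ∈ range j, w.choose k * b.choose (m - k) * k.choose j = 0 :=
    sum_eq_zero fun k hk => by rw [Nat.choose_eq_zero_of_lt (mem_range.mp hk), mul_zero]
  rw [show m + 1 = j + (m - j + 1) by omega, sum_range_add, hlow, zero_add, Nat.add_choose_eq,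
    Nat.sum_antidiagonal_eq_sum_range_succ_mk, mul_sum]
  refine sum_congr rfl fun u hu => ?_
  rw [mul_right_comm, Nat.choose_mul (Nat.le_add_right j u), Nat.add_sub_cancel_left,
    show m - (j + u) = m - j - u by omega, mul_assoc]

noncomputable def hypergeomWeight (w b m k : ℕ) : ℝ :=
  (w.choose k * b.choose (m - k) : ℝ) / ((w + b).choose m : ℝ)

theorem sum_hypergeomWeight_mul_descFactorial (w b m j : ℕ) (hm : m ≤ w + b) :
    ∑ k ∈ range (m + 1), hypergeomWeight w b m k * (k.descFactorial j : ℝ) =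
      w.descFactorial j * ((m.choose j : ℝ) / ((w + b).choose j : ℝ)) := by
  rcases lt_or_ge m j with hmj | hjm
  · rw [Nat.choose_eq_zero_of_lt hmj, Nat.cast_zero, zero_div, mul_zero]
    refine sum_eq_zero fun k hk => ?_
    rw [Nat.descFactorial_eq_zero_iff_lt.mpr (by rw [mem_range] at hk; omega), Nat.cast_zero,
      mul_zero]
  have hsum : ∑ k ∈ range (m + 1), hypergeomWeight w b m k * (k.descFactorial j : ℝ) =
      j.factorial * w.choose j * (w - j + b).choose (m - j) / (w + b).choose m := by
    rw [mul_assoc, ← Nat.cast_mul, ← Nat.sum_choose_mul_choose_mul_choose w b m j hjm]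
    simp only [hypergeomWeight, Nat.descFactorial_eq_factorial_mul_choose, Nat.cast_sum,
      Nat.cast_mul, mul_sum, sum_div]
    exact sum_congr rfl fun k _ => by ring
  rw [hsum, Nat.descFactorial_eq_factorial_mul_choose]
  rcases lt_or_ge w j with hwj | hjw
  · simp [Nat.choose_eq_zero_of_lt hwj]
  have hchoose : ((w + b).choose m * m.choose j : ℝ) =
      (w + b).choose j * (w - j + b).choose (m - j) := by
    rw [show w - j + b = w + b - j by omega]
    exact_mod_cast Nat.choose_mul hjm
  have hTm : ((w + b).choose m : ℝ) ≠ 0 := by exact_mod_cast (Nat.choose_pos hm).ne'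
  have hTj : ((w + b).choose j : ℝ) ≠ 0 := by exact_mod_cast (Nat.choose_pos (hjm.trans hm)).ne'
  field_simp
  push_cast
  linear_combination -(j.factorial * w.choose j : ℝ) * hchoose

theorem sum_hypergeomWeight_mul_pow (w b m ℓ : ℕ) (hm : m ≤ w + b) :
    ∑ k ∈ range (m + 1), hypergeomWeight w b m k * (k : ℝ) ^ ℓ =
      ∑ j ∈ range (ℓ + 1), (Nat.stirlingSecond ℓ j : ℝ) *
        ((m.choose j : ℝ) / ((w + b).choose j : ℝ)) * (descPochhammer ℝ j).eval (w : ℝ) := by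
  calc ∑ k ∈ range (m + 1), hypergeomWeight w b m k * (k : ℝ) ^ ℓ
      = ∑ j ∈ range (ℓ + 1), (Nat.stirlingSecond ℓ j : ℝ) *
          ∑ k ∈ range (m + 1), hypergeomWeight w b m k * (k.descFactorial j : ℝ) := by
        simp only [pow_eq_sum_stirlingSecond_mul_descPochhammer_eval ℓ, mul_sum,
          descPochhammer_eval_eq_descFactorial]
        rw [sum_comm]
        exact sum_congr rfl fun j _ => sum_congr rfl fun k _ => by ring
    _ = _ := sum_congr rfl fun j _ => by
        rw [sum_hypergeomWeight_mul_descFactorial w b m j hm,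
          descPochhammer_eval_eq_descFactorial]
        ring

noncomputable def alphaCoeff (m c T s : ℕ) : ℝ :=
  ∑ ℓ ∈ range (s + 1), (c : ℝ) ^ ℓ * (s.choose ℓ * m.choose ℓ : ℝ) / (T.choose ℓ : ℝ)

noncomputable def betaCoeff (m c T s i : ℕ) : ℝ :=
  ∑ ℓ ∈ Icc i s, (s.choose ℓ : ℝ) * (c : ℝ) ^ ℓ *
    ∑ j ∈ Icc (ℓ + 1 - i) ℓ, (-1 : ℝ) ^ (j + i - 1 - ℓ) *
      (stirling2 ℓ j * stirling1 j (ℓ + 1 - i) * m.choose j : ℝ) / (T.choose j : ℝ)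

theorem alphaM_eq_alphaCoeff (W0 B0 m c n s : ℕ) :
    alphaM W0 B0 m c n s = alphaCoeff m c (urnT W0 B0 m c n) s := rfl

theorem betaM_eq_sum_betaCoeff (W0 B0 m c n s : ℕ) :
    betaM W0 B0 m c n s = ∑ i ∈ Icc 2 s,
      momM W0 B0 m c (s + 1 - i) n * betaCoeff m c (urnT W0 B0 m c n) s i := rfl

theorem sum_hypergeomWeight_mul_add_mul_pow (w b m c s : ℕ) (hm : m ≤ w + b) :
    ∑ k ∈ range (m + 1), hypergeomWeight w b m k * ((w : ℝ) + c * k) ^ s =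
      alphaCoeff m c (w + b) s * (w : ℝ) ^ s +
        ∑ i ∈ Icc 2 s, betaCoeff m c (w + b) s i * (w : ℝ) ^ (s + 1 - i) := by
  set a : ℕ → ℝ := fun j => (m.choose j : ℝ) / ((w + b).choose j : ℝ)
  set κ : ℕ → ℕ → ℝ := fun ℓ i => ∑ j ∈ Icc (ℓ + 1 - i) ℓ, (-1) ^ (j + i - 1 - ℓ) *
    (Nat.stirlingSecond ℓ j * Nat.stirlingFirst j (ℓ + 1 - i) : ℝ) * a j
  have hmoment (ℓ : ℕ) : ∑ k ∈ range (m + 1), hypergeomWeight w b m k * (k : ℝ) ^ ℓ =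
      a ℓ * (w : ℝ) ^ ℓ + ∑ i ∈ Icc 2 ℓ, κ ℓ i * (w : ℝ) ^ (ℓ + 1 - i) :=
    (sum_hypergeomWeight_mul_pow w b m ℓ hm).trans
      (sum_stirlingSecond_mul_descPochhammer_eval ℓ a (w : ℝ))
  calc ∑ k ∈ range (m + 1), hypergeomWeight w b m k * ((w : ℝ) + c * k) ^ s
      = ∑ ℓ ∈ range (s + 1), (s.choose ℓ : ℝ) * (c : ℝ) ^ ℓ * (w : ℝ) ^ (s - ℓ) *
          ∑ k ∈ range (m + 1), hypergeomWeight w b m k * (k : ℝ) ^ ℓ := by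
        simp only [add_comm (w : ℝ), add_pow, mul_sum]
        rw [sum_comm]
        exact sum_congr rfl fun ℓ _ => sum_congr rfl fun k _ => by ring
    _ = ∑ ℓ ∈ range (s + 1), (s.choose ℓ : ℝ) * (c : ℝ) ^ ℓ * a ℓ * (w : ℝ) ^ s +
          ∑ ℓ ∈ range (s + 1), ∑ i ∈ Icc 2 ℓ,
            (s.choose ℓ : ℝ) * (c : ℝ) ^ ℓ * κ ℓ i * (w : ℝ) ^ (s + 1 - i) := by
        rw [← sum_add_distrib]
        refine sum_congr rfl fun ℓ hℓ => ?_
        rw [mem_range] at hℓ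
        rw [hmoment, mul_add, mul_sum]
        congr 1
        · rw [show (w : ℝ) ^ s = (w : ℝ) ^ (s - ℓ) * (w : ℝ) ^ ℓ by
            rw [← pow_add, Nat.sub_add_cancel (by omega)]]
          ring
        · refine sum_congr rfl fun i hi => ?_
          rw [mem_Icc] at hi
          rw [show s + 1 - i = s - ℓ + (ℓ + 1 - i) by omega, pow_add]
          ring
    _ = alphaCoeff m c (w + b) s * (w : ℝ) ^ s +
          ∑ i ∈ Icc 2 s, ∑ ℓ ∈ Icc i s,
            (s.choose ℓ : ℝ) * (c : ℝ) ^ ℓ * κ ℓ i * (w : ℝ) ^ (s + 1 - i) := by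
        congr 1
        · rw [alphaCoeff, sum_mul]
          exact sum_congr rfl fun ℓ _ => by ring
        · exact sum_comm' fun ℓ i => by simp only [mem_range, mem_Icc]; omega
    _ = _ := by
        congr 1
        refine sum_congr rfl fun i _ => ?_
        rw [betaCoeff, sum_mul]
        refine sum_congr rfl fun ℓ _ => ?_
        rw [mul_sum, mul_sum, sum_mul, sum_mul]
        refine sum_congr rfl fun j _ => ?_
        rw [stirling1_eq_stirlingFirst, stirling2_eq_stirlingSecond]
        ring

theorem momM_zero (W0 B0 m c s : ℕ) : momM W0 B0 m c s 0 = (W0 : ℝ) ^ s := by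
  have hW0 : W0 ∈ range (urnT W0 B0 m c 0 + 1) := by rw [mem_range, urnT]; omega
  simp only [momM, massM, ite_mul, one_mul, zero_mul, sum_ite_eq', if_pos hW0]

theorem momM_succ_eq_sum (W0 B0 m c s n : ℕ) :
    momM W0 B0 m c s (n + 1) =
      ∑ w ∈ range (urnT W0 B0 m c n + 1), massM W0 B0 m c n w *
        ∑ k ∈ range (m + 1),
          hypergeomWeight w (urnT W0 B0 m c n - w) m k * ((w : ℝ) + c * k) ^ s := by
  set T := urnT W0 B0 m c n
  set p : ℕ → ℕ → ℝ := fun w k => (w.choose k * (T - w).choose (m - k) : ℝ) / (T.choose m : ℝ)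
  have hT : urnT W0 B0 m c (n + 1) = T + m * c := by simp only [T, urnT]; ring
  calc momM W0 B0 m c s (n + 1)
      = ∑ v ∈ range (T + m * c + 1), ∑ w ∈ range (T + 1), ∑ k ∈ range (m + 1),
          if v = w + c * k then massM W0 B0 m c n w * p w k * (v : ℝ) ^ s else 0 := by
        rw [momM, hT]
        refine sum_congr rfl fun v _ => ?_
        simp only [massM, sum_mul, ite_mul, zero_mul]
        rfl
    _ = ∑ w ∈ range (T + 1), ∑ k ∈ range (m + 1), ∑ v ∈ range (T + m * c + 1),
          if v = w + c * k then massM W0 B0 m c n w * p w k * (v : ℝ) ^ s else 0 := by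
        rw [sum_comm]
        exact sum_congr rfl fun w _ => sum_comm
    _ = ∑ w ∈ range (T + 1), ∑ k ∈ range (m + 1),
          massM W0 B0 m c n w * p w k * ((w + c * k : ℕ) : ℝ) ^ s := by
        refine sum_congr rfl fun w hw => sum_congr rfl fun k hk => ?_
        rw [mem_range] at hw hk
        have hv : w + c * k ∈ range (T + m * c + 1) := by
          rw [mem_range]
          nlinarith
        rw [sum_ite_eq', if_pos hv]
    _ = _ := by
        refine sum_congr rfl fun w hw => ?_
        rw [mem_range] at hw
        rw [mul_sum]
        refine sum_congr rfl fun k _ => ?_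
        rw [hypergeomWeight, Nat.add_sub_cancel' (by omega)]
        push_cast
        ring

theorem momM_succ (W0 B0 m c : ℕ) (hT0 : m ≤ W0 + B0) (s n : ℕ) :
    momM W0 B0 m c s (n + 1) =
      alphaM W0 B0 m c n s * momM W0 B0 m c s n + betaM W0 B0 m c n s := by
  set T := urnT W0 B0 m c n
  have hmT : m ≤ T := by simp only [T, urnT]; omega
  have hstep : ∀ w ∈ range (T + 1), massM W0 B0 m c n w *
      ∑ k ∈ range (m + 1), hypergeomWeight w (T - w) m k * ((w : ℝ) + c * k) ^ s =
        alphaCoeff m c T s * (massM W0 B0 m c n w * (w : ℝ) ^ s) +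
          ∑ i ∈ Icc 2 s, betaCoeff m c T s i * (massM W0 B0 m c n w * (w : ℝ) ^ (s + 1 - i)) := by
    intro w hw
    rw [mem_range] at hw
    rw [sum_hypergeomWeight_mul_add_mul_pow w (T - w) m c s (by omega),
      Nat.add_sub_cancel' (by omega), mul_add, mul_sum]
    congr 1
    · ring
    · exact sum_congr rfl fun i _ => by ring
  rw [momM_succ_eq_sum, sum_congr rfl hstep, sum_add_distrib, sum_comm, alphaM_eq_alphaCoeff,
    betaM_eq_sum_betaCoeff]
  simp only [momM, ← mul_sum, mul_comm _ (betaCoeff _ _ _ _ _)]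
  rfl

theorem one_le_alphaM (W0 B0 m c n s : ℕ) : 1 ≤ alphaM W0 B0 m c n s := by
  rw [alphaM, sum_range_succ']
  simp only [pow_zero, Nat.choose_zero_right, Nat.cast_one, mul_one, div_one,
    le_add_iff_nonneg_left]
  positivity

theorem modelM_moment_closedForm_general (W0 B0 m c : ℕ) (hT0 : m ≤ W0 + B0) :
    ∀ n s : ℕ, 1 ≤ s →
      momM W0 B0 m c s n =
        (∏ j ∈ Finset.range n, alphaM W0 B0 m c j s) *
          ((W0 : ℝ) ^ s + ∑ ℓ ∈ Finset.range n,
            betaM W0 B0 m c ℓ s / ∏ j ∈ Finset.range (ℓ + 1), alphaM W0 B0 m c j s) := by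
  intro n s _
  induction n with
  | zero => simp [momM_zero]
  | succ n ih =>
    have hprod : ∏ j ∈ range (n + 1), alphaM W0 B0 m c j s ≠ 0 :=
      prod_ne_zero_iff.mpr fun j _ => (zero_lt_one.trans_le (one_le_alphaM ..)).ne'
    rw [momM_succ W0 B0 m c hT0, ih, sum_range_succ, ← add_assoc,
      mul_add (∏ j ∈ range (n + 1), _), mul_div_cancel₀ _ hprod, prod_range_succ]
    ring

/-- In model `M`, the closed form for the `s`-th moment:
`E(W_n^s) = (∏_{j<n} α_{j,s}) · (W_0^s + Σ_{ℓ<n} β_{ℓ,s}/∏_{j≤ℓ} α_{j,s})`. -/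
theorem modelM_moment_closedForm (W0 B0 m c : ℕ) (hm : 1 ≤ m) (hc : 1 ≤ c)
    (hW0 : 1 ≤ W0) (hB0 : 1 ≤ B0) (hT0 : m ≤ W0 + B0) :
    ∀ n s : ℕ, 1 ≤ s →
      momM W0 B0 m c s n =
        (∏ j ∈ Finset.range n, alphaM W0 B0 m c j s) *
          ((W0 : ℝ) ^ s + ∑ ℓ ∈ Finset.range n,
            betaM W0 B0 m c ℓ s / ∏ j ∈ Finset.range (ℓ + 1), alphaM W0 B0 m c j s) :=
  modelM_moment_closedForm_general W0 B0 m c hT0
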